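/- For every l ≥ 1 and every s ≥ l + 1, there exist infinitely many odd positive integers n with k(n) = l and k'(n) = s − l; moreover they form exactly one arithmetic progression modulo 2^{s+1}. -/

import Mathlib

def collatzK (n : Nat) : Nat := padicValNat 2 (n + 1)

def collatzApex (n : Nat) : Nat := 3 ^ collatzK n * ((n + 1) / 2 ^ collatzK n) - 1

def collatzKp (n : Nat) : Nat := padicValNat 2 (collatzApex n)

def collatzKappa (n : Nat) : Nat := collatzApex n / 2 ^ collatzKp n

/-!
Write `n + 1 = 2 ^ l * m` with `m` odd, so that the apex is `3 ^ l * m - 1`. A positive integer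
has 2-adic valuation exactly `t` iff it is `≡ 2 ^ t` modulo `2 ^ (t + 1)`, hence `k'(n) = t`
iff `3 ^ l * m ≡ 2 ^ t + 1 [MOD 2 ^ (t + 1)]`. As `3 ^ l` is a unit modulo `2 ^ (t + 1)`, this
pins `m` to one residue class `m₀` modulo `2 ^ (t + 1)`, and so `n + 1` to the class of
`2 ^ l * m₀` modulo `2 ^ (l + t + 1)`; for `t ≥ 1` the residue `m₀` is odd, which makes
`k(n) = l` automatic on that class.
-/

theorem padicValNat_two_eq_iff_modEq {a t : ℕ} (ha : a ≠ 0) :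
    padicValNat 2 a = t ↔ a ≡ 2 ^ t [MOD 2 ^ (t + 1)] := by
  constructor
  · rintro rfl
    set v := padicValNat 2 a
    obtain ⟨b, hb⟩ : 2 ^ v ∣ a := pow_padicValNat_dvd
    have hb_odd : b ≡ 1 [MOD 2] := by
      have h : ¬ 2 ^ (v + 1) ∣ a := pow_succ_padicValNat_not_dvd ha
      rw [hb, pow_succ, Nat.mul_dvd_mul_iff_left (by positivity)] at h
      exact Nat.two_dvd_ne_zero.mp h
    rw [hb, pow_succ]
    simpa using hb_odd.mul_left' (2 ^ v)
  · intro h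
    have h_dvd : 2 ^ t ∣ a := (h.dvd_iff (pow_dvd_pow 2 t.le_succ)).2 dvd_rfl
    have h_not_dvd : ¬ 2 ^ (t + 1) ∣ a := by
      rw [h.dvd_iff dvd_rfl]
      exact Nat.not_dvd_of_pos_of_lt (by positivity) (Nat.pow_lt_pow_succ one_lt_two)
    rw [padicValNat_dvd_iff_le ha] at h_dvd h_not_dvd
    omega

theorem Nat.sub_one_modEq_iff {a b n : ℕ} (ha : 1 ≤ a) :
    a - 1 ≡ b [MOD n] ↔ a ≡ b + 1 [MOD n] := by
  conv_rhs => rw [← Nat.sub_add_cancel ha]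
  exact ⟨(·.add_right 1), (·.add_right_cancel' 1)⟩

theorem odd_of_collatzK_ne_zero {n : ℕ} (h : collatzK n ≠ 0) : Odd n := by
  by_contra hn
  refine h (padicValNat.eq_zero_of_not_dvd ?_)
  rwa [← even_iff_two_dvd, Nat.even_add_one, Nat.not_even_iff_odd]

theorem pow_collatzK_dvd (n : ℕ) : 2 ^ collatzK n ∣ n + 1 :=
  pow_padicValNat_dvd

theorem collatzKp_eq_iff_modEq {n l t m₀ : ℕ} (hl : l ≠ 0) (hK : collatzK n = l)
    (hm₀ : 3 ^ l * m₀ ≡ 2 ^ t + 1 [MOD 2 ^ (t + 1)]) :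
    collatzKp n = t ↔ (n + 1) / 2 ^ l ≡ m₀ [MOD 2 ^ (t + 1)] := by
  set m := (n + 1) / 2 ^ l
  have hm : 0 < m :=
    Nat.div_pos (Nat.le_of_dvd n.succ_pos (hK ▸ pow_collatzK_dvd n)) (by positivity)
  have h3 : 3 ≤ 3 ^ l * m := (Nat.le_self_pow hl 3).trans (Nat.le_mul_of_pos_right _ hm)
  have h_apex : collatzApex n = 3 ^ l * m - 1 := by rw [collatzApex, hK]
  have h_coprime : Nat.gcd (2 ^ (t + 1)) (3 ^ l) = 1 :=
    Nat.Coprime.pow _ _ (by norm_num)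
  rw [collatzKp, h_apex, padicValNat_two_eq_iff_modEq (by omega),
    Nat.sub_one_modEq_iff (by omega)]
  exact ⟨fun h => (h.trans hm₀.symm).cancel_left_of_coprime h_coprime,
    fun h => (h.mul_left _).trans hm₀⟩

theorem collatzK_eq_and_collatzKp_eq_iff_modEq {n l t m₀ : ℕ} (hl : l ≠ 0) (ht : t ≠ 0)
    (hm₀ : 3 ^ l * m₀ ≡ 2 ^ t + 1 [MOD 2 ^ (t + 1)]) :
    collatzK n = l ∧ collatzKp n = t ↔ n ≡ 2 ^ l * m₀ - 1 [MOD 2 ^ (l + t + 1)] := by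
  have hm₀_odd : m₀ ≡ 1 [MOD 2] := by
    have h : Odd (3 ^ l * m₀) := by
      rw [Nat.odd_iff, hm₀.of_dvd (dvd_pow_self 2 t.succ_ne_zero), Nat.add_mod,
        Nat.two_pow_mod_two_eq_zero.mpr (Nat.pos_of_ne_zero ht)]
    exact Nat.odd_iff.mp (Nat.odd_mul.mp h).2
  have hm₀_pos : 1 ≤ 2 ^ l * m₀ := Nat.one_le_iff_ne_zero.mpr
    (mul_ne_zero (by positivity) (by rintro rfl; exact absurd hm₀_odd (by decide)))
  have h_mod : 2 ^ (l + t + 1) = 2 ^ l * 2 ^ (t + 1) := by ring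
  have h_split (hK : collatzK n = l) : n + 1 = 2 ^ l * ((n + 1) / 2 ^ l) :=
    (Nat.mul_div_cancel' (hK ▸ pow_collatzK_dvd n)).symm
  rw [Nat.ModEq.comm, Nat.sub_one_modEq_iff hm₀_pos, Nat.ModEq.comm, h_mod]
  constructor
  · rintro ⟨hK, hKp⟩
    rw [h_split hK, Nat.ModEq.mul_left_cancel_iff' (by positivity)]
    exact (collatzKp_eq_iff_modEq hl hK hm₀).1 hKp
  · intro h
    have hK : collatzK n = l := by
      rw [collatzK, padicValNat_two_eq_iff_modEq n.succ_ne_zero, pow_succ]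
      calc n + 1 ≡ 2 ^ l * m₀ [MOD 2 ^ l * 2] :=
            h.of_dvd (mul_dvd_mul_left _ (dvd_pow_self 2 t.succ_ne_zero))
        _ ≡ 2 ^ l * 1 [MOD 2 ^ l * 2] := hm₀_odd.mul_left' _
        _ = 2 ^ l := mul_one _
    refine ⟨hK, (collatzKp_eq_iff_modEq hl hK hm₀).2 ?_⟩
    rw [h_split hK] at h
    exact Nat.ModEq.mul_left_cancel' (by positivity) h

/-- For every l ≥ 1 and s ≥ l + 1, there are infinitely many odd positive
integers n with k(n) = l and k'(n) = s - l, and they form exactly one residue class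
(arithmetic progression) modulo 2^(s+1). -/
theorem infinitely_many_per_class (l s : ℕ) (hl : 1 ≤ l) (hs : l + 1 ≤ s) :
    {n : ℕ | 0 < n ∧ Odd n ∧ collatzK n = l ∧ collatzKp n = s - l}.Infinite ∧
    ∃! r : ℕ, r < 2 ^ (s + 1) ∧
      ∀ n : ℕ, 0 < n → Odd n →
        ((collatzK n = l ∧ collatzKp n = s - l) ↔ n % 2 ^ (s + 1) = r) := by
  obtain ⟨t, rfl⟩ : ∃ t, s = l + t := ⟨s - l, by omega⟩
  rw [Nat.add_sub_cancel_left]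
  obtain ⟨m₀, -, hm₀⟩ := Nat.exists_mul_mod_eq_of_coprime (2 ^ t + 1)
    (Nat.Coprime.pow l (t + 1) (by norm_num : Nat.Coprime 3 2)) (by positivity)
  set M := 2 ^ (l + t + 1)
  set n₀ := 2 ^ l * m₀ - 1
  have key (n : ℕ) : collatzK n = l ∧ collatzKp n = t ↔ n % M = n₀ % M :=
    collatzK_eq_and_collatzKp_eq_iff_modEq (by omega) (by omega) hm₀
  have pos_odd {n : ℕ} (h : collatzK n = l ∧ collatzKp n = t) : 0 < n ∧ Odd n :=
    have hn := odd_of_collatzK_ne_zero (by omega)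
    ⟨hn.pos, hn⟩
  refine ⟨?_, n₀ % M, ⟨Nat.mod_lt _ (by positivity), fun n _ _ => key n⟩,
    fun r ⟨_, hr⟩ => ?_⟩
  · refine Set.Infinite.mono (fun n hn => ?_)
      (Nat.frequently_atTop_iff_infinite.1 (Nat.frequently_modEq (n := M) (by positivity) n₀))
    have h := (key n).2 hn
    exact ⟨(pos_odd h).1, (pos_odd h).2, h⟩
  · have h := (key n₀).2 rfl
    exact ((hr n₀ (pos_odd h).1 (pos_odd h).2).1 h).symm
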